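/- Let W be a type, S a subset of W, and f, g : W → [0,1]. Then ⨅_{w ∈ S} (f w ⇒ g w) ≤ ((⨅_{w ∈ S} f w) ⇒ (⨅_{w ∈ S} g w)). (This is soundness of the axiom (K_□): □(φ → ψ) → (□φ → □ψ) at any world of any crisp Gödel-Kripke model.) -/

import Mathlib

/-! On the chain `[0,1]` Gödel implication is the residuum of `⊓`, so the inequality reduces to
modus ponens `(f w ⇒ g w) ⊓ f w ≤ g w` at each `w ∈ S`. -/

open unitInterval

instance : Fact ((0:ℝ) ≤ 1) := ⟨zero_le_one⟩

noncomputable instance : CompleteLattice unitInterval := Set.Icc.completeLattice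

/-- Gödel implication on the unit interval. -/
noncomputable def gimp (a b : unitInterval) : unitInterval := if a ≤ b then 1 else b

infixr:60 " ⇒ " => gimp

/-- Gödel negation on the unit interval. -/
noncomputable def gneg (a : unitInterval) : unitInterval := a ⇒ 0

theorem gimp_inf_le (a b : unitInterval) : (a ⇒ b) ⊓ a ≤ b := by
  unfold gimp
  split_ifs with hab
  · exact inf_le_right.trans hab
  · exact inf_le_left

theorem le_gimp_iff {a b c : unitInterval} : c ≤ (a ⇒ b) ↔ c ⊓ a ≤ b := by
  refine ⟨fun h => (inf_le_inf_right a h).trans (gimp_inf_le a b), fun h => ?_⟩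
  unfold gimp
  split_ifs with hab
  · exact le_one c
  · exact (inf_le_iff.mp h).resolve_right hab

theorem soundness_K_box {W : Type*} (S : Set W) (f g : W → unitInterval) :
    (⨅ w ∈ S, (f w ⇒ g w)) ≤ ((⨅ w ∈ S, f w) ⇒ (⨅ w ∈ S, g w)) := by
  refine le_gimp_iff.mpr (le_iInf₂ fun w hw => ?_)
  calc (⨅ w ∈ S, (f w ⇒ g w)) ⊓ (⨅ w ∈ S, f w) ≤ (f w ⇒ g w) ⊓ f w :=
        inf_le_inf (iInf₂_le w hw) (iInf₂_le w hw)
    _ ≤ g w := gimp_inf_le (f w) (g w)
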